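/- arXiv:1802.04982 — 2 statements merged into one kernel-verified Lean document; each statement's English description precedes it below -/
import Mathlib

section
/- Let F_red and F_blue be clausal ground formulas and let T be a closed two-sided clausal ground tableau for F_red and F_blue. Then for every node N of T: (a) F_red ∧ branch_red(N) ⊨ ipol(N) and ipol(N) ⊨ ¬F_blue ∨ ¬branch_blue(N); and (b) lit(ipol(N)) ⊆ lit(F_red ∧ branch_red(N)) ∩ lit(¬F_blue ∨ ¬branch_blue(N)). -/
namespace CTI

/-- Terms of first-order logic: variables and function applications.
Function symbols with empty argument lists play the role of constants. -/
inductive Tm : Type where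
  | var : ℕ → Tm
  | fn  : ℕ → List Tm → Tm

/-- The variables occurring in a term. -/
def Tm.vars : Tm → List ℕ
  | .var x => [x]
  | .fn _ ts => (ts.attach.map (fun t => Tm.vars t.1)).flatten
decreasing_by
  have h := List.sizeOf_lt_of_mem t.2; simp_wf; omega

/-- The function symbols occurring in a term. -/
def Tm.funs : Tm → List ℕ
  | .var _ => []
  | .fn f ts => f :: (ts.attach.map (fun t => Tm.funs t.1)).flatten
decreasing_by
  have h := List.sizeOf_lt_of_mem t.2; simp_wf; omega

/-- A term is ground iff it contains no variables. -/
def Tm.ground (t : Tm) : Prop := t.vars = []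

/-- An interpretation (structure) over domain `D`. -/
structure Interp (D : Type) where
  fn : ℕ → List D → D
  pr : ℕ → List D → Prop

/-- Evaluation of a term under an interpretation and a variable assignment. -/
def Tm.eval {D : Type} (I : Interp D) (a : ℕ → D) : Tm → D
  | .var x => a x
  | .fn f ts => I.fn f (ts.attach.map (fun t => Tm.eval I a t.1))
decreasing_by
  have h := List.sizeOf_lt_of_mem t.2; simp_wf; omega

/-- Formulas of first-order logic without equality. -/
inductive Fml : Type where
  | tru : Fml
  | fls : Fml
  | atom : ℕ → List Tm → Fml
  | neg : Fml → Fml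
  | and : Fml → Fml → Fml
  | or : Fml → Fml → Fml
  | all : ℕ → Fml → Fml
  | ex : ℕ → Fml → Fml

/-- Satisfaction of a formula under an interpretation and an assignment. -/
def Fml.holds {D : Type} (I : Interp D) : (ℕ → D) → Fml → Prop
  | _, .tru => True
  | _, .fls => False
  | a, .atom p ts => I.pr p (ts.map (Tm.eval I a))
  | a, .neg F => ¬ Fml.holds I a F
  | a, .and F G => Fml.holds I a F ∧ Fml.holds I a G
  | a, .or F G => Fml.holds I a F ∨ Fml.holds I a G
  | a, .all x F => ∀ d : D, Fml.holds I (Function.update a x d) F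
  | a, .ex x F => ∃ d : D, Fml.holds I (Function.update a x d) F

/-- Semantic entailment: every structure (with nonempty domain) and assignment
satisfying `F` satisfies `G`. -/
def Entails (F G : Fml) : Prop :=
  ∀ (D : Type) (_ : Nonempty D) (I : Interp D) (a : ℕ → D), F.holds I a → G.holds I a

/-- Semantic equivalence. -/
def EquivF (F G : Fml) : Prop := Entails F G ∧ Entails G F

/-- The atoms occurring in a formula, together with a polarity, relative to
the polarity `pol` of the context (`true` = positive). -/
def Fml.litsP : Bool → Fml → Set (Bool × ℕ × List Tm)
  | _, .tru => ∅
  | _, .fls => ∅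
  | pol, .atom p ts => {(pol, p, ts)}
  | pol, .neg F => Fml.litsP (!pol) F
  | pol, .and F G => Fml.litsP pol F ∪ Fml.litsP pol G
  | pol, .or F G => Fml.litsP pol F ∪ Fml.litsP pol G
  | pol, .all _ F => Fml.litsP pol F
  | pol, .ex _ F => Fml.litsP pol F

/-- lit(F): the set of pairs of an atom together with a polarity such that
the atom occurs in `F` with that polarity. -/
def Fml.lits (F : Fml) : Set (Bool × ℕ × List Tm) := Fml.litsP true F

/-- pred(F): predicates together with polarities of their occurrences. -/
def Fml.preds (F : Fml) : Set (Bool × ℕ) := {bp | ∃ ts, (bp.1, bp.2, ts) ∈ F.lits}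

/-- The predicate symbols occurring in a formula (irrespective of polarity). -/
def Fml.predSyms (F : Fml) : Set ℕ := {p | ∃ b ts, (b, p, ts) ∈ F.lits}

/-- fun(F): the function symbols (including constants) occurring in `F`. -/
def Fml.funs : Fml → Set ℕ
  | .tru => ∅
  | .fls => ∅
  | .atom _ ts => {f | ∃ t ∈ ts, f ∈ Tm.funs t}
  | .neg F => F.funs
  | .and F G => F.funs ∪ G.funs
  | .or F G => F.funs ∪ G.funs
  | .all _ F => F.funs
  | .ex _ F => F.funs

/-- The free variables of a formula. -/
def Fml.fv : Fml → Set ℕ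
  | .tru => ∅
  | .fls => ∅
  | .atom _ ts => {x | ∃ t ∈ ts, x ∈ Tm.vars t}
  | .neg F => F.fv
  | .and F G => F.fv ∪ G.fv
  | .or F G => F.fv ∪ G.fv
  | .all x F => F.fv \ {x}
  | .ex x F => F.fv \ {x}

/-- The variables occurring bound in a formula. -/
def Fml.bv : Fml → Set ℕ
  | .tru => ∅
  | .fls => ∅
  | .atom _ _ => ∅
  | .neg F => F.bv
  | .and F G => F.bv ∪ G.bv
  | .or F G => F.bv ∪ G.bv
  | .all x F => insert x F.bv
  | .ex x F => insert x F.bv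

/-- All variables occurring in a formula (free or bound). -/
def Fml.varsSet : Fml → Set ℕ
  | .tru => ∅
  | .fls => ∅
  | .atom _ ts => {x | ∃ t ∈ ts, x ∈ Tm.vars t}
  | .neg F => F.varsSet
  | .and F G => F.varsSet ∪ G.varsSet
  | .or F G => F.varsSet ∪ G.varsSet
  | .all x F => insert x F.varsSet
  | .ex x F => insert x F.varsSet

/-- Quantifier-free formulas. -/
def Fml.qfree : Fml → Prop
  | .tru => True
  | .fls => True
  | .atom _ _ => True
  | .neg F => F.qfree
  | .and F G => F.qfree ∧ G.qfree
  | .or F G => F.qfree ∧ G.qfree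
  | .all _ _ => False
  | .ex _ _ => False

/-- Ground formulas: quantifier-free and without variables. -/
def Fml.isGround : Fml → Prop
  | .tru => True
  | .fls => True
  | .atom _ ts => ∀ t ∈ ts, Tm.vars t = []
  | .neg F => F.isGround
  | .and F G => F.isGround ∧ G.isGround
  | .or F G => F.isGround ∧ G.isGround
  | .all _ _ => False
  | .ex _ _ => False

end CTI

namespace CTI

/-! ### Literals, clauses, clausal formulas -/

/-- A literal: a polarity (`true` = positive atom, `false` = negated atom),
a predicate symbol and an argument list. -/
abbrev Lit := Bool × ℕ × List Tm

/-- A clause: a finite disjunction of literals, as a list. -/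
abbrev Clause := List Lit

/-- A clausal formula: a finite conjunction of clauses, as a list. -/
abbrev CForm := List Clause

/-- The complement of a literal. -/
def litCompl (l : Lit) : Lit := (!l.1, l.2.1, l.2.2)

/-- The formula corresponding to a literal. -/
def litFml (l : Lit) : Fml := if l.1 then .atom l.2.1 l.2.2 else .neg (.atom l.2.1 l.2.2)

/-- The formula corresponding to a clause (disjunction of its literals). -/
def clauseFml (C : Clause) : Fml := C.foldr (fun l F => .or (litFml l) F) .fls

/-- The formula corresponding to a clausal formula (conjunction of its clauses). -/
def cformFml (cs : CForm) : Fml := cs.foldr (fun C F => .and (clauseFml C) F) .tru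

def litGround (l : Lit) : Prop := ∀ t ∈ l.2.2, Tm.vars t = []
def clauseGround (C : Clause) : Prop := ∀ l ∈ C, litGround l
def cformGround (cs : CForm) : Prop := ∀ C ∈ cs, clauseGround C

/-- The function symbols occurring in a clausal formula. -/
def cformFuns (cs : CForm) : Set ℕ := {f | ∃ C ∈ cs, ∃ l ∈ C, ∃ t ∈ l.2.2, f ∈ Tm.funs t}

/-- Application of a substitution to a term. -/
def Tm.applySub (σ : ℕ → Tm) : Tm → Tm
  | .var x => σ x
  | .fn f ts => .fn f (ts.attach.map (fun t => Tm.applySub σ t.1))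
decreasing_by
  have h := List.sizeOf_lt_of_mem t.2; simp_wf; omega

/-- Application of a substitution to a literal. -/
def litSub (σ : ℕ → Tm) (l : Lit) : Lit := (l.1, l.2.1, l.2.2.map (Tm.applySub σ))

/-- `C` is a substitution instance of the clause `D`. -/
def instClause (C D : Clause) : Prop := ∃ σ : ℕ → Tm, C = D.map (litSub σ)

/-- The subterm relation: `Subt s t` iff `s` occurs as a subterm of `t`. -/
inductive Subt : Tm → Tm → Prop
  | refl (t) : Subt t t
  | step {s u} (f : ℕ) (ts : List Tm) : u ∈ ts → Subt s u → Subt s (.fn f ts)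

/-- Strict subterm relation. -/
def StrictSubt (s t : Tm) : Prop := Subt s t ∧ s ≠ t

/-- `Tm.builtFrom S C t`: `t` is a ground term built from function symbols in `S`,
where the symbols in `C` may additionally be used as constants. -/
inductive Tm.builtFrom (S C : Set ℕ) : Tm → Prop
  | app {f : ℕ} {ts : List Tm} : f ∈ S → (∀ t ∈ ts, Tm.builtFrom S C t) →
      Tm.builtFrom S C (.fn f ts)
  | cst {c : ℕ} : c ∈ C → Tm.builtFrom S C (.fn c [])

/-! ### Clausal tableaux -/

/-- A node of a clausal tableau: a literal label, a side label
(`true` = red/left, `false` = blue/right; ignored for one-sided tableaux)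
and the list of children in left-to-right order.  A whole tableau is the
list of children of the (unlabeled) root. -/
inductive Tab : Type where
  | node : Lit → Bool → List Tab → Tab

def Tab.lit : Tab → Lit | .node l _ _ => l
def Tab.side : Tab → Bool | .node _ s _ => s
def Tab.children : Tab → List Tab | .node _ _ cs => cs

/-- The subtrees of a clausal tableau (given as list of children of the root)
together with the branch of (literal, side) pairs of their strict ancestors,
innermost first. -/
inductive OccIn (T : List Tab) : List (Lit × Bool) → Tab → Prop
  | top {t} : t ∈ T → OccIn T [] t
  | step {br l s cs c} : OccIn T br (.node l s cs) → c ∈ cs → OccIn T ((l, s) :: br) c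

/-- Well-formedness of a (one-sided) clausal tableau below some node, for the
clausal formula `F`: the children of every node either are absent or their
literal labels form an instance of a clause in `F`. -/
inductive TabFor (F : CForm) : Tab → Prop
  | mk {l s cs} : (cs = [] ∨ ∃ D ∈ F, instClause (cs.map Tab.lit) D) →
      (∀ c ∈ cs, TabFor F c) → TabFor F (.node l s cs)

/-- A clausal tableau for the clausal formula `F`. -/
def TableauFor (F : CForm) (T : List Tab) : Prop :=
  (T = [] ∨ ∃ D ∈ F, instClause (T.map Tab.lit) D) ∧ ∀ t ∈ T, TabFor F t

/-- Closedness of the subtree rooted at a node whose strict ancestors carry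
the literals in `br`: every leaf has an ancestor labeled with its complement. -/
inductive ClosedFrom : List Lit → Tab → Prop
  | leaf {br : List Lit} {l s} : litCompl l ∈ br → ClosedFrom br (.node l s [])
  | inner {br : List Lit} {l s cs} : cs ≠ [] → (∀ c ∈ cs, ClosedFrom (l :: br) c) →
      ClosedFrom br (.node l s cs)

/-- A closed clausal tableau: all leaves are closed (the root, being unlabeled,
must have children). -/
def ClosedTableau (T : List Tab) : Prop := T ≠ [] ∧ ∀ t ∈ T, ClosedFrom [] t

/-- All nodes of a subtree satisfy `P`. -/
inductive TabAll (P : Tab → Prop) : Tab → Prop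
  | mk {l s cs} : P (.node l s cs) → (∀ c ∈ cs, TabAll P c) → TabAll P (.node l s cs)

/-! ### Two-sided clausal tableaux and interpolant extraction -/

/-- Well-formedness of a two-sided clausal tableau below a node, for clausal
formulas `Fr` (side `true` = red) and `Fb` (side `false` = blue):
siblings have the same side, and the literal labels of the children of any
node form an instance of a clause of the formula of their side. -/
inductive TwoTabFor (Fr Fb : CForm) : Tab → Prop
  | mk {l s cs} :
      (cs = [] ∨ ∃ b : Bool, (∀ c ∈ cs, Tab.side c = b) ∧
        ∃ D ∈ (if b then Fr else Fb), instClause (cs.map Tab.lit) D) →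
      (∀ c ∈ cs, TwoTabFor Fr Fb c) → TwoTabFor Fr Fb (.node l s cs)

/-- A two-sided clausal tableau for `Fr` and `Fb`. -/
def TwoTableauFor (Fr Fb : CForm) (T : List Tab) : Prop :=
  (T = [] ∨ ∃ b : Bool, (∀ c ∈ T, Tab.side c = b) ∧
    ∃ D ∈ (if b then Fr else Fb), instClause (T.map Tab.lit) D)
  ∧ ∀ t ∈ T, TwoTabFor Fr Fb t

/-- Closedness, with the branch carrying side labels. -/
inductive SClosedFrom : List (Lit × Bool) → Tab → Prop
  | leaf {br : List (Lit × Bool)} {l s} : (∃ s', (litCompl l, s') ∈ br) →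
      SClosedFrom br (.node l s [])
  | inner {br : List (Lit × Bool)} {l s cs} : cs ≠ [] →
      (∀ c ∈ cs, SClosedFrom ((l, s) :: br) c) → SClosedFrom br (.node l s cs)

/-- The value of ipol at a closed leaf, determined by the side `s` of the leaf
and the side `ts` of its target, from the literal label `l`. -/
def leafIpol (s ts : Bool) (l : Lit) : Fml :=
  match s, ts with
  | true, true => .fls
  | true, false => litFml l
  | false, true => litFml (litCompl l)
  | false, false => .tru

/-- `Ipol br t H`: `H` is a value of ipol at the node `t` whose branch of strict
ancestors (with sides) is `br`, for some association of targets to closed leaves.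
At a leaf, the target is an ancestor labeled with the complement of the leaf's
literal; at an inner node, ipol is the disjunction (side red) or conjunction
(side blue) of the values at the children. -/
inductive Ipol : List (Lit × Bool) → Tab → Fml → Prop
  | leaf {br l s ts} : (litCompl l, ts) ∈ br →
      Ipol br (.node l s []) (leafIpol s ts l)
  | innerR {br l s cs Hs} : cs ≠ [] → (∀ c ∈ cs, Tab.side c = true) →
      cs.length = Hs.length →
      (∀ p ∈ List.zip cs Hs, Ipol ((l, s) :: br) p.1 p.2) →
      Ipol br (.node l s cs) (Hs.foldr .or .fls)
  | innerB {br l s cs Hs} : cs ≠ [] → (∀ c ∈ cs, Tab.side c = false) →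
      cs.length = Hs.length →
      (∀ p ∈ List.zip cs Hs, Ipol ((l, s) :: br) p.1 p.2) →
      Ipol br (.node l s cs) (Hs.foldr .and .tru)

/-- `IpolRoot T H`: `H` is a value of ipol at the root of the tableau `T`. -/
inductive IpolRoot : List Tab → Fml → Prop
  | rootR {T Hs} : T ≠ [] → (∀ t ∈ T, Tab.side t = true) →
      T.length = Hs.length → (∀ p ∈ List.zip T Hs, Ipol [] p.1 p.2) →
      IpolRoot T (Hs.foldr .or .fls)
  | rootB {T Hs} : T ≠ [] → (∀ t ∈ T, Tab.side t = false) →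
      T.length = Hs.length → (∀ p ∈ List.zip T Hs, Ipol [] p.1 p.2) →
      IpolRoot T (Hs.foldr .and .tru)

/-- branch_S(N): the conjunction of the literals with side `s` on the branch `br`. -/
def branchFml (s : Bool) (br : List (Lit × Bool)) : Fml :=
  ((br.filter (fun p => p.2 == s)).map (fun p => litFml p.1)).foldr .and .tru

end CTI

namespace CTI

/-! Induction on the derivation of `Ipol`. At a leaf the branch carries the leaf literal and its
complement; `leafIpol` is `⊥` when both are red (they contradict the red branch), `⊤` when both
are blue, and otherwise the red one of the two, whose complement is then blue. The children of a
node with red children are labeled by a clause of `Fr` itself (a ground clause is its only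
instance), so every model of `Fr` makes one child literal true, and the disjunction inherits the
invariant from that child; blue children are dual, with `Fb` and the conjunction. The literal a
child adds to its branch occurs in that clause, which preserves the literal inclusions. -/

theorem _root_.List.exists_mem_zip_of_mem_left {α β : Type*} {l₁ : List α} {l₂ : List β}
    (hlen : l₁.length = l₂.length) {a : α} (ha : a ∈ l₁) :
    ∃ b ∈ l₂, (a, b) ∈ l₁.zip l₂ := by
  obtain ⟨i, hi, rfl⟩ := List.getElem_of_mem ha
  have hi' : i < (l₁.zip l₂).length := by simp [← hlen, hi]
  exact ⟨l₂[i]'(hlen ▸ hi), List.getElem_mem _, by simpa using List.getElem_mem hi'⟩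

theorem _root_.List.exists_mem_zip_of_mem_right {α β : Type*} {l₁ : List α} {l₂ : List β}
    (hlen : l₁.length = l₂.length) {b : β} (hb : b ∈ l₂) :
    ∃ a ∈ l₁, (a, b) ∈ l₁.zip l₂ := by
  obtain ⟨i, hi, rfl⟩ := List.getElem_of_mem hb
  have hi' : i < (l₁.zip l₂).length := by simp [hlen, hi]
  exact ⟨l₁[i]'(hlen ▸ hi), List.getElem_mem _, by simpa using List.getElem_mem hi'⟩

theorem Tm.applySub_eq_self (σ : ℕ → Tm) : ∀ t : Tm, t.vars = [] → t.applySub σ = t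
  | .var _, h => by simp [Tm.vars] at h
  | .fn f ts, h => by
      have hts : ∀ t ∈ ts, t.vars = [] := fun t ht => by
        rw [Tm.vars, List.flatten_eq_nil_iff] at h
        exact h _ (List.mem_map_of_mem (List.mem_attach ts ⟨t, ht⟩))
      rw [Tm.applySub]
      conv_rhs => rw [← List.attach_map_subtype_val ts]
      exact congrArg _ (List.map_congr_left fun t _ => Tm.applySub_eq_self σ t.1 (hts t.1 t.2))
decreasing_by
  have h := List.sizeOf_lt_of_mem t.2; simp_wf; omega

theorem litSub_eq_self {l : Lit} (h : litGround l) (σ : ℕ → Tm) : litSub σ l = l := by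
  obtain ⟨b, p, ts⟩ := l
  simp only [litSub, Prod.mk.injEq, true_and]
  conv_rhs => rw [← List.map_id ts]
  exact List.map_congr_left fun t ht => Tm.applySub_eq_self σ t (h t ht)

theorem instClause.eq_of_clauseGround {C D : Clause} (h : instClause C D)
    (hD : clauseGround D) : C = D := by
  obtain ⟨σ, rfl⟩ := h
  conv_rhs => rw [← List.map_id D]
  exact List.map_congr_left fun l hl => litSub_eq_self (hD l hl) σ

@[simp]
theorem litCompl_litCompl (l : Lit) : litCompl (litCompl l) = l := by
  simp [litCompl]

@[simp]
theorem branchFml_cons_of_ne {s s' : Bool} (h : s' ≠ s) (l : Lit) (br : List (Lit × Bool)) :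
    branchFml s ((l, s') :: br) = branchFml s br := by
  simp [branchFml, h]

section Semantics

variable {D : Type} (I : Interp D) (a : ℕ → D)

@[simp]
theorem holds_foldr_or (L : List Fml) :
    (L.foldr Fml.or .fls).holds I a ↔ ∃ F ∈ L, F.holds I a := by
  induction L <;> simp [Fml.holds, *]

@[simp]
theorem holds_foldr_and (L : List Fml) :
    (L.foldr Fml.and .tru).holds I a ↔ ∀ F ∈ L, F.holds I a := by
  induction L <;> simp [Fml.holds, *]

@[simp]
theorem holds_litFml_litCompl (l : Lit) :
    (litFml (litCompl l)).holds I a ↔ ¬ (litFml l).holds I a := by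
  obtain ⟨b, p, ts⟩ := l
  cases b <;> simp [litFml, litCompl, Fml.holds]

theorem holds_clauseFml (C : Clause) :
    (clauseFml C).holds I a ↔ ∃ l ∈ C, (litFml l).holds I a := by
  induction C with
  | nil => simp [clauseFml, Fml.holds]
  | cons l C ih => simpa [clauseFml, Fml.holds] using Iff.or Iff.rfl ih

theorem holds_cformFml (F : CForm) :
    (cformFml F).holds I a ↔ ∀ C ∈ F, (clauseFml C).holds I a := by
  induction F with
  | nil => simp [cformFml, Fml.holds]
  | cons C F ih => simpa [cformFml, Fml.holds] using Iff.and Iff.rfl ih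

@[simp]
theorem holds_branchFml_cons (s s' : Bool) (l : Lit) (br : List (Lit × Bool)) :
    (branchFml s ((l, s') :: br)).holds I a ↔
      (s' = s → (litFml l).holds I a) ∧ (branchFml s br).holds I a := by
  by_cases h : s' = s <;> simp [branchFml, Fml.holds, h]

theorem holds_litFml_of_holds_branchFml {s : Bool} {br : List (Lit × Bool)}
    (h : (branchFml s br).holds I a) {l : Lit} (hl : (l, s) ∈ br) : (litFml l).holds I a := by
  induction br with
  | nil => simp at hl
  | cons p br ih =>
    obtain ⟨l', s'⟩ := p
    rw [holds_branchFml_cons] at h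
    rcases List.mem_cons.mp hl with hp | hp
    · cases hp; exact h.1 rfl
    · exact ih h.2 hp

end Semantics

section Literals

@[simp]
theorem mem_litsP_foldr_or (pol : Bool) (L : List Fml) (x : Lit) :
    x ∈ (L.foldr Fml.or .fls).litsP pol ↔ ∃ F ∈ L, x ∈ F.litsP pol := by
  induction L <;> simp [Fml.litsP, *]

@[simp]
theorem mem_litsP_foldr_and (pol : Bool) (L : List Fml) (x : Lit) :
    x ∈ (L.foldr Fml.and .tru).litsP pol ↔ ∃ F ∈ L, x ∈ F.litsP pol := by
  induction L <;> simp [Fml.litsP, *]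

@[simp]
theorem litsP_true_litFml (l : Lit) : (litFml l).litsP true = {l} := by
  obtain ⟨b, p, ts⟩ := l
  cases b <;> simp [litFml, Fml.litsP]

@[simp]
theorem litsP_false_litFml (l : Lit) : (litFml l).litsP false = {litCompl l} := by
  obtain ⟨b, p, ts⟩ := l
  cases b <;> simp [litFml, litCompl, Fml.litsP]

theorem mem_litsP_cformFml {pol : Bool} {F : CForm} {x : Lit} :
    x ∈ (cformFml F).litsP pol ↔ ∃ C ∈ F, ∃ l ∈ C, x ∈ (litFml l).litsP pol := by
  induction F with
  | nil => simp [cformFml, Fml.litsP]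
  | cons C F ih =>
    have hC : x ∈ (clauseFml C).litsP pol ↔ ∃ l ∈ C, x ∈ (litFml l).litsP pol := by
      induction C <;> simp_all [clauseFml, Fml.litsP]
    simpa [cformFml, Fml.litsP] using Iff.or hC ih

theorem mem_litsP_branchFml {pol s : Bool} {br : List (Lit × Bool)} {x : Lit} :
    x ∈ (branchFml s br).litsP pol ↔ ∃ l, (l, s) ∈ br ∧ x ∈ (litFml l).litsP pol := by
  rw [branchFml, mem_litsP_foldr_and]
  constructor
  · rintro ⟨_, hF, hx⟩
    obtain ⟨⟨l, s'⟩, hfilter, rfl⟩ := List.mem_map.mp hF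
    obtain ⟨hl, rfl⟩ : (l, s') ∈ br ∧ s' = s := by simpa using List.mem_filter.mp hfilter
    exact ⟨l, hl, hx⟩
  · rintro ⟨l, hl, hx⟩
    exact ⟨_, List.mem_map_of_mem (List.mem_filter.mpr ⟨hl, by simp⟩), hx⟩

end Literals

section Tableaux

@[simp]
theorem Tab.lit_node (l : Lit) (s : Bool) (cs : List Tab) : (Tab.node l s cs).lit = l := rfl

@[simp]
theorem Tab.side_node (l : Lit) (s : Bool) (cs : List Tab) : (Tab.node l s cs).side = s := rfl

variable {Fr Fb : CForm}

theorem TwoTabFor.of_mem {l : Lit} {s : Bool} {cs : List Tab} {c : Tab}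
    (h : TwoTabFor Fr Fb (.node l s cs)) (hc : c ∈ cs) : TwoTabFor Fr Fb c := by
  cases h with | mk _ hcs => exact hcs c hc

theorem TwoTabFor.of_occIn {T : List Tab} {br : List (Lit × Bool)} {t : Tab}
    (hT : ∀ t ∈ T, TwoTabFor Fr Fb t) (ht : OccIn T br t) : TwoTabFor Fr Fb t := by
  induction ht with
  | top ht => exact hT _ ht
  | step _ hc ih => exact ih.of_mem hc

theorem TwoTabFor.map_lit_mem {l : Lit} {s b : Bool} {cs : List Tab}
    (h : TwoTabFor Fr Fb (.node l s cs)) (hg : cformGround (if b then Fr else Fb))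
    (hne : cs ≠ []) (hside : ∀ c ∈ cs, c.side = b) :
    cs.map Tab.lit ∈ if b then Fr else Fb := by
  obtain ⟨c, hc⟩ := List.exists_mem_of_ne_nil cs hne
  cases h with
  | mk hcl _ =>
    rcases hcl with rfl | ⟨b', hb', C, hC, hinst⟩
    · simp at hc
    · obtain rfl : b' = b := (hb' c hc).symm.trans (hside c hc)
      rwa [hinst.eq_of_clauseGround (hg C hC)]

end Tableaux

section LeafValues

variable {br : List (Lit × Bool)} {l : Lit} {s ts : Bool}

theorem holds_leafIpol {D : Type} (I : Interp D) (a : ℕ → D) (hmem : (litCompl l, ts) ∈ br)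
    (h : (branchFml true ((l, s) :: br)).holds I a) : (leafIpol s ts l).holds I a := by
  rw [holds_branchFml_cons] at h
  obtain ⟨hl, hbr⟩ := h
  cases s <;> cases ts <;> simp only [leafIpol, Fml.holds]
  · exact holds_litFml_of_holds_branchFml I a hbr hmem
  · exact hl rfl
  · exact (holds_litFml_litCompl I a l).mp (holds_litFml_of_holds_branchFml I a hbr hmem) (hl rfl)

theorem not_holds_branchFml_of_holds_leafIpol {D : Type} (I : Interp D) (a : ℕ → D)
    (hmem : (litCompl l, ts) ∈ br) (h : (leafIpol s ts l).holds I a) :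
    ¬ (branchFml false ((l, s) :: br)).holds I a := by
  rw [holds_branchFml_cons]
  rintro ⟨hl, hbr⟩
  cases s <;> cases ts <;> simp only [leafIpol, Fml.holds] at h
  · exact (holds_litFml_litCompl I a l).mp (holds_litFml_of_holds_branchFml I a hbr hmem) (hl rfl)
  · exact (holds_litFml_litCompl I a l).mp h (hl rfl)
  · exact (holds_litFml_litCompl I a l).mp (holds_litFml_of_holds_branchFml I a hbr hmem) h

theorem lits_leafIpol_subset_red (hmem : (litCompl l, ts) ∈ br) :
    (leafIpol s ts l).lits ⊆ (branchFml true ((l, s) :: br)).litsP true := by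
  intro x hx
  rw [mem_litsP_branchFml]
  cases s <;> cases ts <;>
    simp only [leafIpol, Fml.lits, Fml.litsP, litsP_true_litFml, Set.mem_singleton_iff,
      Set.mem_empty_iff_false] at hx <;> subst hx
  · exact ⟨_, List.mem_cons_of_mem _ hmem, by simp⟩
  · exact ⟨_, List.mem_cons_self, by simp⟩

theorem lits_leafIpol_subset_blue (hmem : (litCompl l, ts) ∈ br) :
    (leafIpol s ts l).lits ⊆ (branchFml false ((l, s) :: br)).litsP false := by
  intro x hx
  rw [mem_litsP_branchFml]
  cases s <;> cases ts <;>
    simp only [leafIpol, Fml.lits, Fml.litsP, litsP_true_litFml, Set.mem_singleton_iff,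
      Set.mem_empty_iff_false] at hx <;> subst hx
  · exact ⟨_, List.mem_cons_self, by simp⟩
  · exact ⟨_, List.mem_cons_of_mem _ hmem, by simp⟩

end LeafValues

section Invariant

variable {Fr Fb : CForm} {br : List (Lit × Bool)} {t : Tab} {H : Fml}

theorem Ipol.holds_of_holds_red (hgFr : cformGround Fr) (hip : Ipol br t H)
    (ht : TwoTabFor Fr Fb t) {D : Type} (I : Interp D) (a : ℕ → D)
    (hFr : (cformFml Fr).holds I a) (hbr : (branchFml true ((t.lit, t.side) :: br)).holds I a) :
    H.holds I a := by
  induction hip with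
  | leaf hmem => exact holds_leafIpol I a hmem hbr
  | innerR hne hside hlen _ ih =>
    have hC := ht.map_lit_mem (b := true) hgFr hne hside
    obtain ⟨_, hlc, hlit⟩ := (holds_clauseFml I a _).mp ((holds_cformFml I a Fr).mp hFr _ hC)
    obtain ⟨c, hc, rfl⟩ := List.mem_map.mp hlc
    obtain ⟨Hc, hHc, hz⟩ := List.exists_mem_zip_of_mem_left hlen hc
    refine (holds_foldr_or I a _).mpr ⟨Hc, hHc, ih _ hz (ht.of_mem hc) ?_⟩
    simpa [hside c hc] using And.intro hlit hbr
  | innerB _ hside hlen _ ih =>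
    refine (holds_foldr_and I a _).mpr fun Hc hHc => ?_
    obtain ⟨c, hc, hz⟩ := List.exists_mem_zip_of_mem_right hlen hHc
    exact ih _ hz (ht.of_mem hc) (by simpa [hside c hc] using hbr)

theorem Ipol.not_holds_blue_of_holds (hgFb : cformGround Fb) (hip : Ipol br t H)
    (ht : TwoTabFor Fr Fb t) {D : Type} (I : Interp D) (a : ℕ → D) (hH : H.holds I a) :
    ¬ ((cformFml Fb).holds I a ∧ (branchFml false ((t.lit, t.side) :: br)).holds I a) := by
  induction hip with
  | leaf hmem => exact fun ⟨_, hbr⟩ => not_holds_branchFml_of_holds_leafIpol I a hmem hH hbr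
  | innerR _ hside hlen _ ih =>
    obtain ⟨Hc, hHc, hHcH⟩ := (holds_foldr_or I a _).mp hH
    obtain ⟨c, hc, hz⟩ := List.exists_mem_zip_of_mem_right hlen hHc
    simpa [hside c hc] using ih _ hz (ht.of_mem hc) hHcH
  | innerB hne hside hlen _ ih =>
    rintro ⟨hFb, hbr⟩
    have hC := ht.map_lit_mem (b := false) hgFb hne hside
    obtain ⟨_, hlc, hlit⟩ := (holds_clauseFml I a _).mp ((holds_cformFml I a Fb).mp hFb _ hC)
    obtain ⟨c, hc, rfl⟩ := List.mem_map.mp hlc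
    obtain ⟨Hc, hHc, hz⟩ := List.exists_mem_zip_of_mem_left hlen hc
    refine ih _ hz (ht.of_mem hc) ((holds_foldr_and I a _).mp hH Hc hHc) ⟨hFb, ?_⟩
    simpa [hside c hc] using And.intro hlit hbr

theorem Ipol.lits_subset_red (hgFr : cformGround Fr) (hip : Ipol br t H) (ht : TwoTabFor Fr Fb t) :
    H.lits ⊆ (Fml.and (cformFml Fr) (branchFml true ((t.lit, t.side) :: br))).lits := by
  induction hip with
  | leaf hmem => exact fun x hx => Or.inr (lits_leafIpol_subset_red hmem hx)
  | innerR hne hside hlen _ ih =>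
    intro x hx
    obtain ⟨Hc, hHc, hxHc⟩ := (mem_litsP_foldr_or _ _ x).mp hx
    obtain ⟨c, hc, hz⟩ := List.exists_mem_zip_of_mem_right hlen hHc
    rcases ih _ hz (ht.of_mem hc) hxHc with hxFr | hxbr
    · exact Or.inl hxFr
    obtain ⟨m, hm, hxm⟩ := mem_litsP_branchFml.mp hxbr
    rcases List.mem_cons.mp hm with hmc | hm
    · have hC := ht.map_lit_mem (b := true) hgFr hne hside
      obtain rfl : m = c.lit := (Prod.mk.inj hmc).1
      exact Or.inl (mem_litsP_cformFml.mpr ⟨_, hC, c.lit, List.mem_map_of_mem hc, hxm⟩)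
    · exact Or.inr (mem_litsP_branchFml.mpr ⟨m, hm, hxm⟩)
  | innerB _ hside hlen _ ih =>
    intro x hx
    obtain ⟨Hc, hHc, hxHc⟩ := (mem_litsP_foldr_and _ _ x).mp hx
    obtain ⟨c, hc, hz⟩ := List.exists_mem_zip_of_mem_right hlen hHc
    simpa [hside c hc] using ih _ hz (ht.of_mem hc) hxHc

theorem Ipol.lits_subset_blue (hgFb : cformGround Fb) (hip : Ipol br t H) (ht : TwoTabFor Fr Fb t) :
    H.lits ⊆
      (Fml.or (.neg (cformFml Fb)) (.neg (branchFml false ((t.lit, t.side) :: br)))).lits := by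
  induction hip with
  | leaf hmem => exact fun x hx => Or.inr (lits_leafIpol_subset_blue hmem hx)
  | innerR _ hside hlen _ ih =>
    intro x hx
    obtain ⟨Hc, hHc, hxHc⟩ := (mem_litsP_foldr_or _ _ x).mp hx
    obtain ⟨c, hc, hz⟩ := List.exists_mem_zip_of_mem_right hlen hHc
    simpa [hside c hc] using ih _ hz (ht.of_mem hc) hxHc
  | innerB hne hside hlen _ ih =>
    intro x hx
    obtain ⟨Hc, hHc, hxHc⟩ := (mem_litsP_foldr_and _ _ x).mp hx
    obtain ⟨c, hc, hz⟩ := List.exists_mem_zip_of_mem_right hlen hHc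
    rcases ih _ hz (ht.of_mem hc) hxHc with hxFb | hxbr
    · exact Or.inl hxFb
    obtain ⟨m, hm, hxm⟩ := mem_litsP_branchFml.mp hxbr
    rcases List.mem_cons.mp hm with hmc | hm
    · have hC := ht.map_lit_mem (b := false) hgFb hne hside
      obtain rfl : m = c.lit := (Prod.mk.inj hmc).1
      exact Or.inl (mem_litsP_cformFml.mpr ⟨_, hC, c.lit, List.mem_map_of_mem hc, hxm⟩)
    · exact Or.inr (mem_litsP_branchFml.mpr ⟨m, hm, hxm⟩)

end Invariant

theorem ground_ipol_invariant_general (Fr Fb : CForm) (T : List Tab)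
    (hgFr : cformGround Fr) (hgFb : cformGround Fb)
    (htab : TwoTableauFor Fr Fb T) :
    ∀ br t, OccIn T br t → ∀ H, Ipol br t H →
      (Entails (.and (cformFml Fr) (branchFml true ((Tab.lit t, Tab.side t) :: br))) H
       ∧ Entails H (.or (.neg (cformFml Fb))
           (.neg (branchFml false ((Tab.lit t, Tab.side t) :: br)))))
      ∧ Fml.lits H ⊆
          Fml.lits (.and (cformFml Fr) (branchFml true ((Tab.lit t, Tab.side t) :: br)))
          ∩ Fml.lits (.or (.neg (cformFml Fb))
              (.neg (branchFml false ((Tab.lit t, Tab.side t) :: br)))) := by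
  intro br t hocc H hip
  have ht : TwoTabFor Fr Fb t := .of_occIn htab.2 hocc
  refine ⟨⟨?_, ?_⟩, ?_⟩
  · exact fun _ _ I a ⟨hFr, hbr⟩ => hip.holds_of_holds_red hgFr ht I a hFr hbr
  · exact fun _ _ I a hH => not_and_or.mp (hip.not_holds_blue_of_holds hgFb ht I a hH)
  · exact fun _ hx => ⟨hip.lits_subset_red hgFr ht hx, hip.lits_subset_blue hgFb ht hx⟩

/-- correctness invariant of ground interpolant extraction from a
closed two-sided clausal ground tableau. -/
theorem ground_ipol_invariant (Fr Fb : CForm) (T : List Tab)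
    (hgFr : cformGround Fr) (hgFb : cformGround Fb)
    (htab : TwoTableauFor Fr Fb T)
    (hgT : ∀ br t, OccIn T br t → litGround (Tab.lit t))
    (hclosed : ∀ t ∈ T, SClosedFrom [] t) :
    ∀ br t, OccIn T br t → ∀ H, Ipol br t H →
      (Entails (.and (cformFml Fr) (branchFml true ((Tab.lit t, Tab.side t) :: br))) H
       ∧ Entails H (.or (.neg (cformFml Fb))
           (.neg (branchFml false ((Tab.lit t, Tab.side t) :: br)))))
      ∧ Fml.lits H ⊆
          Fml.lits (.and (cformFml Fr) (branchFml true ((Tab.lit t, Tab.side t) :: br)))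
          ∩ Fml.lits (.or (.neg (cformFml Fb))
              (.neg (branchFml false ((Tab.lit t, Tab.side t) :: br)))) :=
  ground_ipol_invariant_general Fr Fb T hgFr hgFb htab

end CTI
end

section
/- Let F and G be first-order sentences without equality such that F ⊨ G. Let F_c and G_c be clausal formulas with variable sets ū = var(F_c) and v̄ = var(G_c), and let f_c and g_c be disjoint sets of function symbols (Skolem functions) such that: f_c does not occur in G, G_c, or F; g_c does not occur in F, F_c, or G; fun(F_c) ⊆ fun(F) ∪ f_c and fun(G_c) ⊆ fun(G) ∪ g_c; pred(F_c) ⊆ pred(F) and pred(¬G_c) ⊆ pred(G); F is equivalent to ∃f_c ∀ū F_c and ¬G is equivalent to ∃g_c ∀v̄ G_c, where these second-order quantifications are interpreted semantically via expansions of structures. Let k be a constant occurring in none of F, G, F_c, G_c, and define f := fun(F_c) \ fun(G_c) and g := (fun(G_c) \ fun(F_c)) ∪ {k}. Let F_b (respectively G_b) be a conjunction of ground instances of clauses of F_c (respectively G_c) in which all terms are ground terms built from k and the function symbols occurring in F_c or G_c, and let H_b be a ground formula with F_b ⊨ H_b, H_b ⊨ ¬G_b, and lit(H_b) ⊆ lit(F_b)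 ∩ lit(¬G_b). Call a term an f-term (g-term) if its outermost function symbol is in f (in g). Let θ be an injective mapping from fresh variables to the set of those f-terms and g-terms that occur in H_b at a position not strictly inside another f-term or g-term, and let H_q be the result of replacing in H_b every such occurrence of a term t in the range of θ by the variable that θ maps to t. Let z₁,…,zₙ be the variables of H_q ordered so that i < j whenever θ(zᵢ) is a strict subterm of θ(zⱼ), and for each i let Qᵢ := ∀ if θ(zᵢ) is a g-term and Qᵢ := ∃ if θ(zᵢ) is an f-term. Then Q₁z₁…Qₙzₙ H_q is a Craig-Lyndon interpolant of F and G. -/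
namespace CTI

/-- Application of a quantifier prefix (`true` = universal, `false` =
existential quantifier) to a formula. -/
def applyPrefix : List (Bool × ℕ) → Fml → Fml
  | [], F => F
  | (true, x) :: Q, F => .all x (applyPrefix Q F)
  | (false, x) :: Q, F => .ex x (applyPrefix Q F)

/-- `H` is a Craig-Lyndon interpolant of `F` and `G`. -/
def CraigLyndon (F G H : Fml) : Prop :=
  Fml.fv H = ∅ ∧ Entails F H ∧ Entails H G ∧
  Fml.preds H ⊆ Fml.preds F ∩ Fml.preds G ∧
  Fml.funs H ⊆ Fml.funs F ∩ Fml.funs G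

end CTI

namespace CTI

/-- `I` and `I'` agree on all function symbols outside `Sf` and all predicate
symbols outside `Sp`. -/
def AgreeExcept {D : Type} (Sf Sp : Set ℕ) (I I' : Interp D) : Prop :=
  (∀ f, f ∉ Sf → I.fn f = I'.fn f) ∧ (∀ p, p ∉ Sp → I.pr p = I'.pr p)

/-- The terms occurring in a formula as an argument of a predicate. -/
def Fml.pargs : Fml → Set Tm
  | .tru => ∅
  | .fls => ∅
  | .atom _ ts => {t | t ∈ ts}
  | .neg F => F.pargs
  | .and F G => F.pargs ∪ G.pargs
  | .or F G => F.pargs ∪ G.pargs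
  | .all _ F => F.pargs
  | .ex _ F => F.pargs

/-- `TopSym S t u`: `u` occurs in `t` as a subterm whose principal functor is in
`S`, at a position not strictly inside another such subterm. -/
inductive TopSym (S : Set ℕ) : Tm → Tm → Prop
  | here {f : ℕ} {ts : List Tm} : f ∈ S → TopSym S (.fn f ts) (.fn f ts)
  | there {f : ℕ} {ts : List Tm} {t u : Tm} :
      f ∉ S → t ∈ ts → TopSym S t u → TopSym S (.fn f ts) u

/-- The `S`-terms occurring in `H` at a position not strictly inside
another `S`-term. -/
def Fml.topTerms (S : Set ℕ) (H : Fml) : Set Tm := {u | ∃ t ∈ H.pargs, TopSym S t u}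

open Classical in
/-- Replace every occurrence of an `S`-term that is not strictly inside another
`S`-term by the variable assigned to it by `v`. -/
noncomputable def absTm (S : Set ℕ) (v : Tm → ℕ) : Tm → Tm
  | .var x => .var x
  | .fn f ts =>
      if f ∈ S then .var (v (.fn f ts))
      else .fn f (ts.attach.map (fun t => absTm S v t.1))
decreasing_by
  have h := List.sizeOf_lt_of_mem t.2; simp_wf; omega

/-- Apply `absTm` to all terms of a formula. -/
noncomputable def Fml.absF (S : Set ℕ) (v : Tm → ℕ) : Fml → Fml
  | .tru => .tru
  | .fls => .fls
  | .atom p ts => .atom p (ts.map (absTm S v))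
  | .neg F => .neg (F.absF S v)
  | .and F G => .and (F.absF S v) (G.absF S v)
  | .or F G => .or (F.absF S v) (G.absF S v)
  | .all x F => .all x (F.absF S v)
  | .ex x F => .ex x (F.absF S v)

/-- `t` is a term whose principal functor is in `g`. -/
def isGTm (g : Set ℕ) (t : Tm) : Prop := ∃ h ts, t = Tm.fn h ts ∧ h ∈ g

open Classical in
/-- The quantifier prefix of the lifted interpolant: for each replaced term, a
universal quantifier if it is a `g`-term and an existential quantifier if it is
an `f`-term, upon the variable assigned to it, in the given order. -/
noncomputable def mkPrefix (g : Set ℕ) (v : Tm → ℕ) (zs : List Tm) (H : Fml) : Fml :=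
  zs.foldr (fun t K => if isGTm g t then Fml.all (v t) K else Fml.ex (v t) K) H

/-- f: the function symbols occurring in `Fc` but not in `Gc`. -/
def fSet (Fc Gc : CForm) : Set ℕ := cformFuns Fc \ cformFuns Gc

/-- g: the function symbols occurring in `Gc` but not in `Fc`, plus the fresh
constant `k`. -/
def gSet (Fc Gc : CForm) (k : ℕ) : Set ℕ := (cformFuns Gc \ cformFuns Fc) ∪ {k}

end CTI

/-!
Every model of `F` expands to a model `I` of `∀ Fc`. Interpret the ground terms in the term
structure whose predicates are those of `I` applied to the values of the terms, where a term
replaced by a variable of the prefix takes the value of that variable. If every existentially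
bound `f`-term gets its Skolem value, i.e. the value of its head applied to its arguments, this
map respects every symbol of `Fc` (universal `g`-terms have their heads outside `Fc`), so the
term structure satisfies the ground instances `Fb`, hence `Hb`, i.e. `I` satisfies `Hq` under
the assignment. The order of the prefix makes the Skolem value of `θ(zᵢ)` depend only on
variables bound before `zᵢ`, so it can serve as witness for `∃ zᵢ`. Symmetrically, every model
of `¬G` satisfies the dual prefix in front of `¬Hq`, which contradicts `Hq`. The symbols left
in `Hq` occur in both `Fc` and `Gc`; hence none of them is a Skolem symbol, and all of them
occur in both `F` and `G`.
-/

namespace CTI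

theorem Tm.inductionOn {P : Tm → Prop} (var : ∀ x, P (.var x))
    (fn : ∀ f ts, (∀ t ∈ ts, P t) → P (.fn f ts)) : ∀ t, P t
  | .var x => var x
  | .fn f ts => fn f ts fun t _ => Tm.inductionOn var fn t
decreasing_by
  have := List.sizeOf_lt_of_mem ‹t ∈ ts›; simp_wf; omega

@[simp] theorem Tm.vars_var (x : ℕ) : Tm.vars (.var x) = [x] := by rw [Tm.vars]

@[simp] theorem Tm.vars_fn (f : ℕ) (ts : List Tm) :
    Tm.vars (.fn f ts) = (ts.map Tm.vars).flatten := by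
  rw [Tm.vars]; simp

@[simp] theorem Tm.funs_var (x : ℕ) : Tm.funs (.var x) = [] := by rw [Tm.funs]

@[simp] theorem Tm.funs_fn (f : ℕ) (ts : List Tm) :
    Tm.funs (.fn f ts) = f :: (ts.map Tm.funs).flatten := by
  rw [Tm.funs]; simp

@[simp] theorem Tm.eval_var {D : Type} (I : Interp D) (a : ℕ → D) (x : ℕ) :
    Tm.eval I a (.var x) = a x := by rw [Tm.eval]

@[simp] theorem Tm.eval_fn {D : Type} (I : Interp D) (a : ℕ → D) (f : ℕ) (ts : List Tm) :
    Tm.eval I a (.fn f ts) = I.fn f (ts.map (Tm.eval I a)) := by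
  rw [Tm.eval]; simp

@[simp] theorem Tm.applySub_var (σ : ℕ → Tm) (x : ℕ) : Tm.applySub σ (.var x) = σ x := by
  rw [Tm.applySub]

@[simp] theorem Tm.applySub_fn (σ : ℕ → Tm) (f : ℕ) (ts : List Tm) :
    Tm.applySub σ (.fn f ts) = .fn f (ts.map (Tm.applySub σ)) := by
  rw [Tm.applySub]; simp

@[simp] theorem absTm_var (S : Set ℕ) (v : Tm → ℕ) (x : ℕ) :
    absTm S v (.var x) = .var x := by
  rw [absTm]

theorem absTm_fn_of_mem {S : Set ℕ} (v : Tm → ℕ) {f : ℕ} (ts : List Tm) (h : f ∈ S) :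
    absTm S v (.fn f ts) = .var (v (.fn f ts)) := by
  rw [absTm]; simp [h]

theorem absTm_fn_of_notMem {S : Set ℕ} (v : Tm → ℕ) {f : ℕ} (ts : List Tm) (h : f ∉ S) :
    absTm S v (.fn f ts) = .fn f (ts.map (absTm S v)) := by
  rw [absTm]; simp [h]

theorem Tm.vars_eq_nil_of_mem_args {f : ℕ} {ts : List Tm} (h : Tm.vars (.fn f ts) = [])
    {t : Tm} (ht : t ∈ ts) : Tm.vars t = [] := by
  simp only [Tm.vars_fn, List.flatten_eq_nil_iff, List.mem_map] at h
  exact h _ ⟨t, ht, rfl⟩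

theorem Tm.builtFrom.vars_eq_nil {S C : Set ℕ} {t : Tm} (h : Tm.builtFrom S C t) :
    Tm.vars t = [] := by
  induction h with
  | app _ _ ih => simpa [List.flatten_eq_nil_iff] using ih
  | cst => simp

theorem Tm.builtFrom.funs_subset {S C : Set ℕ} {t : Tm} (h : Tm.builtFrom S C t) :
    ∀ f ∈ Tm.funs t, f ∈ S ∪ C := by
  induction h with
  | app hf _ ih =>
    simp only [Tm.funs_fn, List.mem_cons, List.mem_flatten, List.mem_map]
    rintro g (rfl | ⟨_, ⟨t, ht, rfl⟩, hg⟩)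
    exacts [Or.inl hf, ih t ht g hg]
  | cst hc => simpa using Or.inr hc

theorem Subt.sizeOf_le {s t : Tm} (h : Subt s t) : sizeOf s ≤ sizeOf t := by
  induction h with
  | refl => rfl
  | step f ts hmem _ ih =>
    have := List.sizeOf_lt_of_mem hmem
    simp only [Tm.fn.sizeOf_spec]; omega

theorem Subt.strictSubt_fn {u s : Tm} {f : ℕ} {ts : List Tm} (hu : Subt u s) (hs : s ∈ ts) :
    StrictSubt u (.fn f ts) := by
  refine ⟨.step f ts hs hu, fun heq => ?_⟩
  have h1 := hu.sizeOf_le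
  have h2 := List.sizeOf_lt_of_mem hs
  rw [heq, Tm.fn.sizeOf_spec] at h1; omega

theorem Subt.vars_eq_nil {u t : Tm} (h : Subt u t) (ht : Tm.vars t = []) : Tm.vars u = [] := by
  induction h with
  | refl => exact ht
  | step f ts hmem _ ih => exact ih (Tm.vars_eq_nil_of_mem_args ht hmem)

theorem TopSym.exists_eq_fn {S : Set ℕ} {t u : Tm} (h : TopSym S t u) :
    ∃ f ts, u = .fn f ts ∧ f ∈ S := by
  induction h with
  | here hf => exact ⟨_, _, rfl, hf⟩
  | there _ _ _ ih => exact ih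

theorem TopSym.subt {S : Set ℕ} {t u : Tm} (h : TopSym S t u) : Subt u t := by
  induction h with
  | here => exact .refl _
  | there _ hmem _ ih => exact .step _ _ hmem ih

theorem funs_absTm_subset (S : Set ℕ) (v : Tm → ℕ) :
    ∀ w : Tm, ∀ f ∈ Tm.funs (absTm S v w), f ∈ Tm.funs w ∧ f ∉ S := by
  refine Tm.inductionOn (fun x => by simp) fun g ts ih f hf => ?_
  by_cases hg : g ∈ S
  · simp [absTm_fn_of_mem v ts hg] at hf
  · simp only [absTm_fn_of_notMem v ts hg, Tm.funs_fn, List.map_map, List.mem_cons,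
      List.mem_flatten, List.mem_map, Function.comp] at hf
    rcases hf with rfl | ⟨_, ⟨t, ht, rfl⟩, hft⟩
    · simpa using hg
    · obtain ⟨h1, h2⟩ := ih t ht f hft
      refine ⟨?_, h2⟩
      simp only [Tm.funs_fn, List.mem_cons, List.mem_flatten, List.mem_map]
      exact Or.inr ⟨_, ⟨t, ht, rfl⟩, h1⟩

theorem vars_absTm_subset (S : Set ℕ) (v : Tm → ℕ) :
    ∀ w : Tm, ∀ x ∈ Tm.vars (absTm S v w),
      x ∈ Tm.vars w ∨ ∃ u, TopSym S w u ∧ x = v u := by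
  refine Tm.inductionOn (fun y => by simp) fun g ts ih x hx => ?_
  by_cases hg : g ∈ S
  · simp only [absTm_fn_of_mem v ts hg, Tm.vars_var, List.mem_singleton] at hx
    exact Or.inr ⟨_, .here hg, hx⟩
  · simp only [absTm_fn_of_notMem v ts hg, Tm.vars_fn, List.map_map, List.mem_flatten,
      List.mem_map, Function.comp] at hx
    obtain ⟨_, ⟨t, ht, rfl⟩, hxt⟩ := hx
    rcases ih t ht x hxt with h | ⟨u, hu, rfl⟩
    · left
      simp only [Tm.vars_fn, List.mem_flatten, List.mem_map]
      exact ⟨_, ⟨t, ht, rfl⟩, h⟩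
    · exact Or.inr ⟨u, .there hg ht hu, rfl⟩

theorem Tm.eval_congr {D : Type} (I : Interp D) {a a' : ℕ → D} :
    ∀ t : Tm, (∀ x ∈ Tm.vars t, a x = a' x) → Tm.eval I a t = Tm.eval I a' t := by
  refine Tm.inductionOn (fun x h => by simpa using h x) fun f ts ih h => ?_
  simp only [Tm.eval_fn]
  congr 1
  refine List.map_congr_left fun t ht => ih t ht fun x hx => h x ?_
  simp only [Tm.vars_fn, List.mem_flatten, List.mem_map]
  exact ⟨_, ⟨t, ht, rfl⟩, hx⟩

theorem Tm.eval_congr_interp {D : Type} {I I' : Interp D} (a : ℕ → D) :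
    ∀ t : Tm, (∀ f ∈ Tm.funs t, I.fn f = I'.fn f) → Tm.eval I a t = Tm.eval I' a t := by
  refine Tm.inductionOn (fun x _ => by simp) fun f ts ih h => ?_
  simp only [Tm.eval_fn]
  rw [h f (by simp)]
  congr 1
  refine List.map_congr_left fun t ht => ih t ht fun g hg => h g ?_
  simp only [Tm.funs_fn, List.mem_cons, List.mem_flatten, List.mem_map]
  exact Or.inr ⟨_, ⟨t, ht, rfl⟩, hg⟩

theorem Fml.holds_congr {D : Type} (I : Interp D) (F : Fml) :
    ∀ {a a' : ℕ → D}, (∀ x ∈ F.fv, a x = a' x) → (F.holds I a ↔ F.holds I a') := by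
  have update_agree : ∀ {a a' : ℕ → D} {y : ℕ} {F : Fml} (d : D),
      (∀ x ∈ F.fv \ {y}, a x = a' x) →
      ∀ x ∈ F.fv, Function.update a y d x = Function.update a' y d x := by
    intro a a' y F d h x hx
    by_cases hxy : x = y
    · simp [hxy]
    · simp [Function.update_of_ne hxy, h x ⟨hx, hxy⟩]
  induction F with
  | tru | fls => simp [Fml.holds]
  | atom p ts =>
    intro a a' h
    simp only [Fml.holds]
    rw [List.map_congr_left fun t ht => Tm.eval_congr I t fun x hx => h x ⟨t, ht, hx⟩]
  | neg F ih => exact fun h => not_congr (ih h)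
  | and F G ihF ihG =>
    exact fun h => and_congr (ihF fun x hx => h x (.inl hx)) (ihG fun x hx => h x (.inr hx))
  | or F G ihF ihG =>
    exact fun h => or_congr (ihF fun x hx => h x (.inl hx)) (ihG fun x hx => h x (.inr hx))
  | all y F ih => exact fun h => forall_congr' fun d => ih (update_agree d h)
  | ex y F ih => exact fun h => exists_congr fun d => ih (update_agree d h)

theorem Fml.holds_congr_interp {D : Type} {I I' : Interp D} (hpr : I.pr = I'.pr) (F : Fml) :
    ∀ {a : ℕ → D}, (∀ f ∈ F.funs, I.fn f = I'.fn f) →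
      (F.holds I a ↔ F.holds I' a) := by
  induction F with
  | tru | fls => simp [Fml.holds]
  | atom p ts =>
    intro a h
    simp only [Fml.holds, hpr]
    rw [List.map_congr_left fun t ht => Tm.eval_congr_interp a t fun f hf => h f ⟨t, ht, hf⟩]
  | neg F ih => exact fun h => not_congr (ih h)
  | and F G ihF ihG =>
    exact fun h => and_congr (ihF fun f hf => h f (.inl hf)) (ihG fun f hf => h f (.inr hf))
  | or F G ihF ihG =>
    exact fun h => or_congr (ihF fun f hf => h f (.inl hf)) (ihG fun f hf => h f (.inr hf))
  | all y F ih => exact fun h => forall_congr' fun d => ih h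
  | ex y F ih => exact fun h => exists_congr fun d => ih h

theorem Fml.holds_of_fv_eq_empty {D : Type} {I : Interp D} {F : Fml} (hF : F.fv = ∅)
    {a : ℕ → D} (h : F.holds I a) (a' : ℕ → D) : F.holds I a' :=
  (F.holds_congr I (by simp [hF])).mp h

theorem Fml.holds_iff_of_agreeExcept {D : Type} {S : Set ℕ} {I I' : Interp D}
    (hI : AgreeExcept S ∅ I I') {F : Fml} (hF : ∀ f ∈ F.funs, f ∉ S) {a : ℕ → D} :
    F.holds I a ↔ F.holds I' a :=
  F.holds_congr_interp (funext fun p => hI.2 p (Set.notMem_empty p))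
    fun f hf => hI.1 f (hF f hf)

theorem holds_clauseFml_iff {D : Type} (I : Interp D) (a : ℕ → D) (C : Clause) :
    (clauseFml C).holds I a ↔ ∃ l ∈ C, (litFml l).holds I a := by
  induction C with
  | nil => simp [clauseFml, Fml.holds]
  | cons l C ih => simp only [clauseFml, List.foldr_cons] at ih ⊢; simp [Fml.holds, ih]

theorem holds_cformFml_iff {D : Type} (I : Interp D) (a : ℕ → D) (L : CForm) :
    (cformFml L).holds I a ↔ ∀ C ∈ L, (clauseFml C).holds I a := by
  induction L with
  | nil => simp [cformFml, Fml.holds]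
  | cons C L ih => simp only [cformFml, List.foldr_cons] at ih ⊢; simp [Fml.holds, ih]

theorem litsP_litFml (c : Bool) (l : Lit) :
    (litFml l).litsP c = {(if l.1 then c else !c, l.2.1, l.2.2)} := by
  rcases l with ⟨_ | _, p, ts⟩ <;> rfl

theorem mem_litsP_cformFml_s6 {c : Bool} {L : CForm} {x : Bool × ℕ × List Tm} :
    x ∈ (cformFml L).litsP c ↔
      ∃ C ∈ L, ∃ l ∈ C, x = (if l.1 then c else !c, l.2.1, l.2.2) := by
  have hC : ∀ C : Clause, x ∈ (clauseFml C).litsP c ↔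
      ∃ l ∈ C, x = (if l.1 then c else !c, l.2.1, l.2.2) := by
    intro C
    induction C with
    | nil => simp [clauseFml, Fml.litsP]
    | cons l C ih =>
      simp only [clauseFml, List.foldr_cons] at ih ⊢
      simp [Fml.litsP, litsP_litFml, ih]
  induction L with
  | nil => simp [cformFml, Fml.litsP]
  | cons C L ih =>
    simp only [cformFml, List.foldr_cons] at ih ⊢
    simp [Fml.litsP, hC, ih]

section Abstraction

variable {S : Set ℕ} {v : Tm → ℕ}

theorem Fml.funs_absF_subset (X : Fml) :
    ∀ f ∈ (X.absF S v).funs, ∃ w ∈ X.pargs, f ∈ Tm.funs (absTm S v w) := by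
  induction X <;> simp_all [Fml.absF, Fml.funs, Fml.pargs] <;> grind

theorem Fml.fv_absF_subset (X : Fml) :
    ∀ x ∈ (X.absF S v).fv, ∃ w ∈ X.pargs, x ∈ Tm.vars (absTm S v w) := by
  induction X <;> simp_all [Fml.absF, Fml.fv, Fml.pargs] <;> grind

theorem Fml.isGround.vars_eq_nil {X : Fml} (hX : X.isGround) :
    ∀ w ∈ X.pargs, Tm.vars w = [] := by
  induction X <;> simp_all [Fml.isGround, Fml.pargs] <;> grind

theorem Fml.exists_litsP_of_mem_pargs (X : Fml) :
    ∀ c, ∀ w ∈ X.pargs, ∃ x ∈ X.litsP c, w ∈ x.2.2 := by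
  induction X with
  | neg F ih => exact fun c => ih !c
  | _ => simp_all [Fml.litsP, Fml.pargs] <;> grind

theorem Fml.exists_litsP_of_mem_litsP_absF (X : Fml) :
    ∀ c, ∀ x ∈ (X.absF S v).litsP c, ∃ ts, (x.1, x.2.1, ts) ∈ X.litsP c := by
  induction X with
  | neg F ih => exact fun c => ih !c
  | _ => simp_all [Fml.absF, Fml.litsP] <;> grind

end Abstraction

open Classical in
noncomputable def quantPrefix (isU : Tm → Prop) (v : Tm → ℕ) (zs : List Tm) (X : Fml) : Fml :=
  zs.foldr (fun t K => if isU t then .all (v t) K else .ex (v t) K) X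

section QuantPrefix

variable (isU : Tm → Prop) (v : Tm → ℕ)

theorem mkPrefix_eq_quantPrefix (g : Set ℕ) (zs : List Tm) (X : Fml) :
    mkPrefix g v zs X = quantPrefix (isGTm g) v zs X := rfl

theorem funs_quantPrefix (zs : List Tm) (X : Fml) : (quantPrefix isU v zs X).funs = X.funs := by
  induction zs with
  | nil => rfl
  | cons t zs ih => simp only [quantPrefix, List.foldr_cons] at ih ⊢; split_ifs <;> exact ih

theorem litsP_quantPrefix (c : Bool) (zs : List Tm) (X : Fml) :
    (quantPrefix isU v zs X).litsP c = X.litsP c := by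
  induction zs with
  | nil => rfl
  | cons t zs ih => simp only [quantPrefix, List.foldr_cons] at ih ⊢; split_ifs <;> exact ih

theorem fv_quantPrefix (zs : List Tm) (X : Fml) :
    (quantPrefix isU v zs X).fv = X.fv \ {x | ∃ t ∈ zs, v t = x} := by
  induction zs with
  | nil => simp [quantPrefix]
  | cons t zs ih =>
    simp only [quantPrefix, List.foldr_cons] at ih ⊢
    split_ifs <;>
    · ext x
      simp only [Fml.fv, ih, Set.mem_sdiff, Set.mem_ofPred_eq, Set.mem_singleton_iff,
        List.mem_cons]
      grind

variable {isU v} {D : Type} {I : Interp D} {a : ℕ → D} {t : Tm} {zs : List Tm} {X : Fml}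

theorem holds_quantPrefix_cons_of_isU (h : isU t) :
    (quantPrefix isU v (t :: zs) X).holds I a ↔
      ∀ d, (quantPrefix isU v zs X).holds I (Function.update a (v t) d) := by
  simp only [quantPrefix, List.foldr_cons, if_pos h, Fml.holds]

theorem holds_quantPrefix_cons_of_not_isU (h : ¬ isU t) :
    (quantPrefix isU v (t :: zs) X).holds I a ↔
      ∃ d, (quantPrefix isU v zs X).holds I (Function.update a (v t) d) := by
  simp only [quantPrefix, List.foldr_cons, if_neg h, Fml.holds]

theorem not_holds_quantPrefix_of_holds_dual :
    (quantPrefix (¬ isU ·) v zs (.neg X)).holds I a →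
      ¬ (quantPrefix isU v zs X).holds I a := by
  induction zs generalizing a with
  | nil => exact id
  | cons t zs ih =>
    by_cases hU : isU t
    · rw [holds_quantPrefix_cons_of_not_isU (not_not_intro hU),
        holds_quantPrefix_cons_of_isU hU]
      exact fun ⟨d, hd⟩ h => ih hd (h d)
    · rw [holds_quantPrefix_cons_of_isU (isU := (¬ isU ·)) hU,
        holds_quantPrefix_cons_of_not_isU hU]
      exact fun h ⟨d, hd⟩ => ih (h d) hd

end QuantPrefix

section TermModel

variable {D : Type} (I : Interp D)

def termModel (e : Tm → D) : Interp Tm := ⟨.fn, fun p ts => I.pr p (ts.map e)⟩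

def IsHomOn (e : Tm → D) (S : Set ℕ) : Prop :=
  ∀ f ∈ S, ∀ ts, e (.fn f ts) = I.fn f (ts.map e)

variable {I}

theorem Tm.eval_termModel (e : Tm → D) (b : ℕ → Tm) :
    ∀ t : Tm, Tm.vars t = [] → Tm.eval (termModel I e) b t = t := by
  refine Tm.inductionOn (fun x h => by simp at h) fun f ts ih h => ?_
  rw [Tm.eval_fn]
  exact congrArg (Tm.fn f) (List.map_congr_left (fun t ht =>
    ih t ht (Tm.vars_eq_nil_of_mem_args h ht)) |>.trans (List.map_id ts))

theorem IsHomOn.apply_applySub {e : Tm → D} {S : Set ℕ} (he : IsHomOn I e S) (σ : ℕ → Tm) :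
    ∀ u : Tm, (∀ f ∈ Tm.funs u, f ∈ S) → e (u.applySub σ) = Tm.eval I (e ∘ σ) u := by
  refine Tm.inductionOn (fun x _ => by simp) fun f us ih hS => ?_
  rw [Tm.applySub_fn, Tm.eval_fn, he f (hS f (by simp)), List.map_map]
  refine congrArg (I.fn f) (List.map_congr_left fun u hu => ih u hu fun g hg => hS g ?_)
  simp only [Tm.funs_fn, List.mem_cons, List.mem_flatten, List.mem_map]
  exact Or.inr ⟨_, ⟨u, hu, rfl⟩, hg⟩

theorem holds_termModel_of_instances {e : Tm → D} {Cc Cb : CForm}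
    (hCc : ∀ a, (cformFml Cc).holds I a) (he : IsHomOn I e (cformFuns Cc))
    (hCb : ∀ C ∈ Cb, ∃ D ∈ Cc, instClause C D) (hCbG : cformGround Cb) (b : ℕ → Tm) :
    (cformFml Cb).holds (termModel I e) b := by
  rw [holds_cformFml_iff]
  intro C hC
  obtain ⟨Dc, hDc, σ, rfl⟩ := hCb C hC
  obtain ⟨⟨pol, p, us⟩, hl, hlI⟩ :=
    (holds_clauseFml_iff _ _ _).mp ((holds_cformFml_iff _ _ _).mp (hCc (e ∘ σ)) Dc hDc)
  refine (holds_clauseFml_iff _ _ _).mpr ⟨_, List.mem_map_of_mem hl, ?_⟩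
  have hargs : ((us.map (Tm.applySub σ)).map (Tm.eval (termModel I e) b)).map e =
      us.map (Tm.eval I (e ∘ σ)) := by
    rw [List.map_map, List.map_map]
    refine List.map_congr_left fun u hu => ?_
    simp only [Function.comp_apply]
    rw [Tm.eval_termModel e b _ (hCbG _ hC _ (List.mem_map_of_mem hl) _ (List.mem_map_of_mem hu))]
    exact he.apply_applySub σ u fun f hf => ⟨Dc, hDc, _, hl, u, hu, hf⟩
  cases pol <;> simp only [litFml, litSub, Bool.false_eq_true, ↓reduceIte, Fml.holds,
    ← hargs] at hlI ⊢ <;> exact hlI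

end TermModel

section Override

variable {D : Type} (I : Interp D) (v : Tm → ℕ) (zs : List Tm)

open Classical in
noncomputable def evalOverride (a : ℕ → D) : Tm → D
  | .var x => a x
  | .fn f ts =>
      if Tm.fn f ts ∈ zs then a (v (.fn f ts))
      else I.fn f (ts.attach.map fun t => evalOverride a t.1)
decreasing_by
  have := List.sizeOf_lt_of_mem t.2; simp_wf; omega

variable {I v zs}

@[simp] theorem evalOverride_var (a : ℕ → D) (x : ℕ) :
    evalOverride I v zs a (.var x) = a x := by
  rw [evalOverride]

theorem evalOverride_fn_of_mem (a : ℕ → D) {f : ℕ} {ts : List Tm} (h : Tm.fn f ts ∈ zs) :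
    evalOverride I v zs a (.fn f ts) = a (v (.fn f ts)) := by
  rw [evalOverride]; simp [h]

theorem evalOverride_fn_of_notMem (a : ℕ → D) {f : ℕ} {ts : List Tm} (h : Tm.fn f ts ∉ zs) :
    evalOverride I v zs a (.fn f ts) = I.fn f (ts.map (evalOverride I v zs a)) := by
  rw [evalOverride]; simp [h]

theorem evalOverride_congr {a a' : ℕ → D} :
    ∀ s : Tm, (∀ x ∈ Tm.vars s, a x = a' x) →
      (∀ u ∈ zs, Subt u s → a (v u) = a' (v u)) →
      evalOverride I v zs a s = evalOverride I v zs a' s := by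
  refine Tm.inductionOn (fun x h _ => by simpa using h x) fun f ts ih hvar hzs => ?_
  by_cases hm : Tm.fn f ts ∈ zs
  · rw [evalOverride_fn_of_mem _ hm, evalOverride_fn_of_mem _ hm]
    exact hzs _ hm (.refl _)
  · rw [evalOverride_fn_of_notMem _ hm, evalOverride_fn_of_notMem _ hm]
    refine congrArg (I.fn f) (List.map_congr_left fun t ht => ih t ht (fun x hx => hvar x ?_)
      fun u hu hut => hzs u hu (.step f ts ht hut))
    simp only [Tm.vars_fn, List.mem_flatten, List.mem_map]
    exact ⟨_, ⟨t, ht, rfl⟩, hx⟩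

theorem eval_absTm {S : Set ℕ} (hS : ∀ f ts, Tm.fn f ts ∈ zs → f ∈ S) (a : ℕ → D) :
    ∀ w : Tm, (∀ u, TopSym S w u → u ∈ zs) →
      Tm.eval I a (absTm S v w) = evalOverride I v zs a w := by
  refine Tm.inductionOn (fun x _ => by simp) fun f ts ih htop => ?_
  by_cases hf : f ∈ S
  · rw [absTm_fn_of_mem v ts hf, evalOverride_fn_of_mem _ (htop _ (.here hf)), Tm.eval_var]
  · rw [absTm_fn_of_notMem v ts hf, evalOverride_fn_of_notMem _ fun hm => hf (hS f ts hm),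
      Tm.eval_fn, List.map_map]
    exact congrArg (I.fn f) (List.map_congr_left fun t ht =>
      ih t ht fun u hu => htop u (.there hf ht hu))

theorem holds_absF_iff_termModel {S : Set ℕ} (hS : ∀ f ts, Tm.fn f ts ∈ zs → f ∈ S)
    (a : ℕ → D) (b : ℕ → Tm) (X : Fml) (hX : X.isGround)
    (htop : X.topTerms S ⊆ {u | u ∈ zs}) :
    (X.absF S v).holds I a ↔ X.holds (termModel I (evalOverride I v zs a)) b := by
  induction X with
  | tru | fls => exact Iff.rfl
  | atom p ts =>
    simp only [Fml.absF, Fml.holds]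
    refine iff_of_eq (congrArg (I.pr p) ?_)
    rw [List.map_map, List.map_map]
    refine List.map_congr_left fun w hw => ?_
    rw [Function.comp_apply, Function.comp_apply, Tm.eval_termModel _ b w (hX w hw)]
    exact eval_absTm hS a w fun u hu => htop ⟨w, hw, hu⟩
  | neg F ih => exact not_congr (ih hX htop)
  | and F G ihF ihG =>
    exact and_congr (ihF hX.1 fun u ⟨w, hw, hu⟩ => htop ⟨w, .inl hw, hu⟩)
      (ihG hX.2 fun u ⟨w, hw, hu⟩ => htop ⟨w, .inr hw, hu⟩)
  | or F G ihF ihG =>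
    exact or_congr (ihF hX.1 fun u ⟨w, hw, hu⟩ => htop ⟨w, .inl hw, hu⟩)
      (ihG hX.2 fun u ⟨w, hw, hu⟩ => htop ⟨w, .inr hw, hu⟩)
  | all | ex => exact hX.elim

end Override

section Coherence

variable {D : Type} {I : Interp D} {v : Tm → ℕ} {zs : List Tm} {isU : Tm → Prop}

variable (I v zs isU) in
/-- The existentially bound terms of `P` carry their Skolem values. -/
def Coherent (a : ℕ → D) (P : List Tm) : Prop :=
  ∀ f ts, Tm.fn f ts ∈ P → ¬ isU (.fn f ts) →
    a (v (.fn f ts)) = I.fn f (ts.map (evalOverride I v zs a))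

theorem Coherent.isHomOn {S : Set ℕ} {a : ℕ → D} (hcoh : Coherent I v zs isU a zs)
    (hU : ∀ f ts, Tm.fn f ts ∈ zs → f ∈ S → ¬ isU (.fn f ts)) :
    IsHomOn I (evalOverride I v zs a) S := by
  intro f hf ts
  by_cases hm : Tm.fn f ts ∈ zs
  · rw [evalOverride_fn_of_mem _ hm]; exact hcoh f ts hm (hU f ts hm hf)
  · exact evalOverride_fn_of_notMem _ hm

theorem holds_absF_of_coherent {S : Set ℕ} {Cc Cb : CForm} {H0 : Fml} {a : ℕ → D}
    (hCc : ∀ a, (cformFml Cc).holds I a) (hCb : ∀ C ∈ Cb, ∃ D ∈ Cc, instClause C D)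
    (hCbG : cformGround Cb) (hEnt : Entails (cformFml Cb) H0) (hH0 : H0.isGround)
    (hS : ∀ f ts, Tm.fn f ts ∈ zs → f ∈ S) (htop : H0.topTerms S ⊆ {u | u ∈ zs})
    (hU : ∀ f ts, Tm.fn f ts ∈ zs → f ∈ cformFuns Cc → ¬ isU (.fn f ts))
    (hcoh : Coherent I v zs isU a zs) :
    (H0.absF S v).holds I a :=
  (holds_absF_iff_termModel hS a (fun _ => .var 0) H0 hH0 htop).mpr <|
    hEnt Tm ⟨.var 0⟩ _ _ <|
      holds_termModel_of_instances hCc (hcoh.isHomOn hU) hCb hCbG _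

theorem evalOverride_update_of_not_strictSubt (hground : ∀ t ∈ zs, Tm.vars t = [])
    (hinj : Set.InjOn v {t | t ∈ zs}) {t : Tm} (ht : t ∈ zs) {g : ℕ} {us : List Tm}
    (hg : Tm.fn g us ∈ zs) (hnot : ¬ StrictSubt t (.fn g us)) {s : Tm} (hs : s ∈ us)
    (a : ℕ → D) (d : D) :
    evalOverride I v zs (Function.update a (v t) d) s = evalOverride I v zs a s := by
  have hs0 : Tm.vars s = [] := Tm.vars_eq_nil_of_mem_args (hground _ hg) hs
  refine evalOverride_congr s (by simp [hs0]) fun u hu hus => Function.update_of_ne ?_ _ _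
  rintro hvu
  obtain rfl : u = t := hinj hu ht hvu
  exact hnot (hus.strictSubt_fn hs)

theorem Coherent.update (hground : ∀ t ∈ zs, Tm.vars t = []) (hinj : Set.InjOn v {t | t ∈ zs})
    {pre : List Tm} {a : ℕ → D} (hcoh : Coherent I v zs isU a pre) (hpre : pre ⊆ zs)
    {f : ℕ} {ts : List Tm} (ht : Tm.fn f ts ∈ zs)
    (hnot : ∀ t ∈ pre, ¬ StrictSubt (.fn f ts) t)
    {d : D} (hd : ¬ isU (.fn f ts) → d = I.fn f (ts.map (evalOverride I v zs a))) :
    Coherent I v zs isU (Function.update a (v (.fn f ts)) d) (pre ++ [.fn f ts]) := by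
  intro g us hmem hU
  by_cases heq : Tm.fn g us = Tm.fn f ts
  · obtain ⟨rfl, rfl⟩ := Tm.fn.inj heq
    rw [Function.update_self, hd hU]
    exact congrArg (I.fn g) (List.map_congr_left fun s hs =>
      (evalOverride_update_of_not_strictSubt hground hinj ht ht (fun h => h.2 rfl) hs a _).symm)
  · have hmem' : Tm.fn g us ∈ pre := by simpa [heq] using hmem
    rw [Function.update_of_ne fun h => heq (hinj (hpre hmem') ht h), hcoh g us hmem' hU]
    exact congrArg (I.fn g) (List.map_congr_left fun s hs =>
      (evalOverride_update_of_not_strictSubt hground hinj ht (hpre hmem')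
        (hnot _ hmem') hs a d).symm)

/-- Each existential quantifier is witnessed by the Skolem value of its term, which depends only
on terms bound earlier. -/
theorem holds_quantPrefix_of_coherent (hground : ∀ t ∈ zs, Tm.vars t = [])
    (hinj : Set.InjOn v {t | t ∈ zs}) (hfn : ∀ t ∈ zs, ∃ f ts, t = .fn f ts)
    (hord : zs.Pairwise fun s t => ¬ StrictSubt t s) {X : Fml}
    (hX : ∀ a, Coherent I v zs isU a zs → X.holds I a) (a : ℕ → D) :
    (quantPrefix isU v zs X).holds I a := by
  suffices h : ∀ suf pre, zs = pre ++ suf → ∀ a, Coherent I v zs isU a pre →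
      (quantPrefix isU v suf X).holds I a from
    h zs [] rfl a fun _ _ h => absurd h List.not_mem_nil
  intro suf
  induction suf with
  | nil =>
    intro pre hzs a hcoh
    rw [List.append_nil] at hzs
    exact hX a (hzs ▸ hcoh)
  | cons t suf ih =>
    intro pre hzs a hcoh
    obtain ⟨f, ts, rfl⟩ := hfn t (by simp [hzs])
    have hnot : ∀ t ∈ pre, ¬ StrictSubt (.fn f ts) t := fun t ht =>
      (List.pairwise_append.mp (hzs ▸ hord)).2.2 t ht _ List.mem_cons_self
    have hpre : pre ⊆ zs := hzs ▸ List.subset_append_left _ _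
    have ht : Tm.fn f ts ∈ zs := by simp [hzs]
    have hzs' : zs = (pre ++ [.fn f ts]) ++ suf := by simp [hzs]
    by_cases hU : isU (.fn f ts)
    · exact (holds_quantPrefix_cons_of_isU hU).mpr fun d =>
        ih _ hzs' _ (hcoh.update hground hinj hpre ht hnot fun h => absurd hU h)
    · exact (holds_quantPrefix_cons_of_not_isU hU).mpr
        ⟨_, ih _ hzs' _ (hcoh.update hground hinj hpre ht hnot fun _ => rfl)⟩

end Coherence

theorem pairwise_not_strictSubt_of_order {zs : List Tm}
    (hord : ∀ (i j : ℕ) (hi : i < zs.length) (hj : j < zs.length),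
      StrictSubt (zs.get ⟨i, hi⟩) (zs.get ⟨j, hj⟩) → i < j) :
    zs.Pairwise fun s t => ¬ StrictSubt t s :=
  List.pairwise_iff_getElem.mpr fun i j hi hj hij h => absurd (hord j i hj hi h) (by omega)

theorem holds_quantPrefix_absF {D : Type} {I : Interp D} {Cc Cb : CForm} {H0 : Fml}
    {S : Set ℕ} {isU : Tm → Prop} {v : Tm → ℕ} {zs : List Tm}
    (hCc : ∀ a, (cformFml Cc).holds I a) (hCb : ∀ C ∈ Cb, ∃ D ∈ Cc, instClause C D)
    (hCbG : cformGround Cb) (hEnt : Entails (cformFml Cb) H0) (hH0 : H0.isGround)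
    (hzs : ∀ t, t ∈ zs ↔ t ∈ H0.topTerms S) (hinj : Set.InjOn v (H0.topTerms S))
    (hord : zs.Pairwise fun s t => ¬ StrictSubt t s)
    (hU : ∀ f ∈ S, f ∈ cformFuns Cc → ∀ ts, ¬ isU (.fn f ts)) (a : ℕ → D) :
    (quantPrefix isU v zs (H0.absF S v)).holds I a := by
  have hzs' : {t | t ∈ zs} = H0.topTerms S := Set.ext hzs
  have hground : ∀ t ∈ zs, Tm.vars t = [] := fun t ht => by
    obtain ⟨w, hw, hwt⟩ := (hzs t).mp ht
    exact hwt.subt.vars_eq_nil (hH0.vars_eq_nil w hw)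
  have hfn : ∀ t ∈ zs, ∃ f ts, t = .fn f ts ∧ f ∈ S := fun t ht => by
    obtain ⟨w, -, hwt⟩ := (hzs t).mp ht
    exact hwt.exists_eq_fn
  have hS : ∀ f ts, Tm.fn f ts ∈ zs → f ∈ S := fun f ts h => by
    obtain ⟨g, us, heq, hg⟩ := hfn _ h
    exact (Tm.fn.inj heq).1 ▸ hg
  exact holds_quantPrefix_of_coherent hground (hzs' ▸ hinj)
    (fun t ht => (hfn t ht).imp fun _ ⟨us, h, _⟩ => ⟨us, h⟩) hord
    (fun a hcoh => holds_absF_of_coherent hCc hCb hCbG hEnt hH0 hS hzs'.symm.subset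
      (fun f ts hm hf => hU f (hS f ts hm) hf ts) hcoh) a

theorem fv_quantPrefix_absF_eq_empty {isU : Tm → Prop} {S : Set ℕ} {v : Tm → ℕ}
    {zs : List Tm} {X : Fml} (hX : X.isGround) (hzs : X.topTerms S ⊆ {t | t ∈ zs}) :
    (quantPrefix isU v zs (X.absF S v)).fv = ∅ := by
  rw [fv_quantPrefix, Set.sdiff_eq_empty]
  intro x hx
  obtain ⟨w, hw, hxw⟩ := X.fv_absF_subset x hx
  rcases vars_absTm_subset S v w x hxw with h | ⟨u, hu, rfl⟩
  · simp [hX.vars_eq_nil w hw] at h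
  · exact ⟨u, hzs ⟨w, hw, hu⟩, rfl⟩

theorem preds_quantPrefix_absF_subset (isU : Tm → Prop) (S : Set ℕ) (v : Tm → ℕ)
    (zs : List Tm) (X : Fml) : (quantPrefix isU v zs (X.absF S v)).preds ⊆ X.preds := by
  rintro ⟨b, p⟩ ⟨ts, hts⟩
  rw [Fml.lits, litsP_quantPrefix] at hts
  exact X.exists_litsP_of_mem_litsP_absF true _ hts

theorem exists_mem_litsP_of_instances {Cc Cb : CForm}
    (hCb : ∀ C ∈ Cb, ∃ D ∈ Cc, instClause C D)
    {c b : Bool} {p : ℕ} {ts : List Tm} (h : (b, p, ts) ∈ (cformFml Cb).litsP c) :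
    ∃ us, (b, p, us) ∈ (cformFml Cc).litsP c := by
  obtain ⟨C, hC, l, hl, hbl⟩ := mem_litsP_cformFml_s6.mp h
  obtain ⟨Dc, hDc, σ, rfl⟩ := hCb C hC
  obtain ⟨l, hl', rfl⟩ := List.mem_map.mp hl
  simp only [litSub, Prod.mk.injEq] at hbl
  exact ⟨l.2.2, mem_litsP_cformFml_s6.mpr ⟨Dc, hDc, l, hl', by rw [hbl.1, hbl.2.1]; rfl⟩⟩

theorem isGTm_fn_iff {g : Set ℕ} {f : ℕ} {ts : List Tm} : isGTm g (.fn f ts) ↔ f ∈ g := by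
  simp [isGTm]

theorem funs_absF_subset_inter {Fc Gc Fb : CForm} {k : ℕ} {Hb : Fml} (v : Tm → ℕ)
    (hlits : Hb.lits ⊆ (cformFml Fb).lits)
    (hFbT : ∀ C ∈ Fb, ∀ l ∈ C, ∀ t ∈ l.2.2,
      Tm.builtFrom (cformFuns Fc ∪ cformFuns Gc) {k} t) :
    (Hb.absF (fSet Fc Gc ∪ gSet Fc Gc k) v).funs ⊆ cformFuns Fc ∩ cformFuns Gc := by
  intro f hf
  obtain ⟨w, hw, hfw⟩ := Hb.funs_absF_subset f hf
  obtain ⟨hfw, hfS⟩ := funs_absTm_subset _ v w f hfw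
  obtain ⟨x, hx, hwx⟩ := Hb.exists_litsP_of_mem_pargs true w hw
  obtain ⟨C, hC, l, hl, rfl⟩ := mem_litsP_cformFml_s6.mp (hlits hx)
  have := (hFbT C hC l hl w hwx).funs_subset f hfw
  simp only [fSet, gSet, Set.mem_union, Set.mem_sdiff, Set.mem_singleton_iff] at this hfS
  exact ⟨by tauto, by tauto⟩

theorem not_isGTm_gSet_of_mem_left {Fc Gc : CForm} {k f : ℕ} (hkFc : k ∉ cformFuns Fc)
    (hf : f ∈ cformFuns Fc) (ts : List Tm) : ¬ isGTm (gSet Fc Gc k) (.fn f ts) := by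
  rw [isGTm_fn_iff]
  rintro ((⟨-, hf'⟩ | rfl))
  exacts [hf' hf, hkFc hf]

theorem isGTm_gSet_of_mem_right {Fc Gc : CForm} {k f : ℕ} (hS : f ∈ fSet Fc Gc ∪ gSet Fc Gc k)
    (hf : f ∈ cformFuns Gc) (ts : List Tm) : isGTm (gSet Fc Gc k) (.fn f ts) := by
  rw [isGTm_fn_iff]
  exact hS.resolve_left fun h => h.2 hf

theorem cti_lifting_correct_general (F G : Fml) (hsF : F.fv = ∅) (hsG : G.fv = ∅)
    (Fc Gc : CForm) (fc gc : Set ℕ)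
    (hfcGc : ∀ s ∈ fc, s ∉ cformFuns Gc)
    (hgcFc : ∀ s ∈ gc, s ∉ cformFuns Fc)
    (hfunF : cformFuns Fc ⊆ F.funs ∪ fc)
    (hfunG : cformFuns Gc ⊆ G.funs ∪ gc)
    (hpredF : (cformFml Fc).preds ⊆ F.preds)
    (hpredG : (Fml.neg (cformFml Gc)).preds ⊆ G.preds)
    (heqvF : ∀ (D : Type) (_ : Nonempty D) (I : Interp D),
        (∀ a : ℕ → D, F.holds I a) ↔
          ∃ I' : Interp D, AgreeExcept fc ∅ I I' ∧ ∀ a : ℕ → D, (cformFml Fc).holds I' a)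
    (heqvG : ∀ (D : Type) (_ : Nonempty D) (I : Interp D),
        (∀ a : ℕ → D, (Fml.neg G).holds I a) ↔
          ∃ I' : Interp D, AgreeExcept gc ∅ I I' ∧ ∀ a : ℕ → D, (cformFml Gc).holds I' a)
    (k : ℕ)
    (hkFc : k ∉ cformFuns Fc)
    (Fb Gb : CForm)
    (hFb : ∀ C ∈ Fb, ∃ D ∈ Fc, instClause C D)
    (hGb : ∀ C ∈ Gb, ∃ D ∈ Gc, instClause C D)
    (hFbT : ∀ C ∈ Fb, ∀ l ∈ C, ∀ t ∈ l.2.2,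
      Tm.builtFrom (cformFuns Fc ∪ cformFuns Gc) {k} t)
    (hGbT : ∀ C ∈ Gb, ∀ l ∈ C, ∀ t ∈ l.2.2,
      Tm.builtFrom (cformFuns Fc ∪ cformFuns Gc) {k} t)
    (Hb : Fml) (hHbg : Hb.isGround)
    (h1 : Entails (cformFml Fb) Hb)
    (h2 : Entails Hb (.neg (cformFml Gb)))
    (h3 : Fml.lits Hb ⊆ Fml.lits (cformFml Fb) ∩ Fml.lits (.neg (cformFml Gb)))
    (v : Tm → ℕ)
    (hvinj : ∀ t ∈ Hb.topTerms (fSet Fc Gc ∪ gSet Fc Gc k),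
             ∀ u ∈ Hb.topTerms (fSet Fc Gc ∪ gSet Fc Gc k), v t = v u → t = u)
    (zs : List Tm)
    (hzs : ∀ t : Tm, t ∈ zs ↔ t ∈ Hb.topTerms (fSet Fc Gc ∪ gSet Fc Gc k))
    (hord : ∀ (i j : ℕ) (hi : i < zs.length) (hj : j < zs.length),
      StrictSubt (zs.get ⟨i, hi⟩) (zs.get ⟨j, hj⟩) → i < j) :
    CraigLyndon F G
      (mkPrefix (gSet Fc Gc k) v zs (Hb.absF (fSet Fc Gc ∪ gSet Fc Gc k) v)) := by
  rw [mkPrefix_eq_quantPrefix]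
  have hpair := pairwise_not_strictSubt_of_order hord
  have hfuns : (quantPrefix (isGTm (gSet Fc Gc k)) v zs
      (Hb.absF (fSet Fc Gc ∪ gSet Fc Gc k) v)).funs ⊆ cformFuns Fc ∩ cformFuns Gc := by
    rw [funs_quantPrefix]
    exact funs_absF_subset_inter v (fun x hx => (h3 hx).1) hFbT
  refine ⟨fv_quantPrefix_absF_eq_empty hHbg fun t ht => (hzs t).mpr ht, ?_, ?_, ?_, ?_⟩
  · intro D hD I a hF
    obtain ⟨I', hI, hFc⟩ := (heqvF D hD I).mp (Fml.holds_of_fv_eq_empty hsF hF)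
    refine (Fml.holds_iff_of_agreeExcept hI fun f hf hfc => hfcGc f hfc (hfuns hf).2).mpr ?_
    exact holds_quantPrefix_absF hFc hFb (fun C hC l hl t ht => (hFbT C hC l hl t ht).vars_eq_nil)
      h1 hHbg hzs hvinj hpair (fun f _ hf => not_isGTm_gSet_of_mem_left hkFc hf) a
  · intro D hD I a hH
    by_contra hG
    obtain ⟨I', hI, hGc⟩ := (heqvG D hD I).mp (Fml.holds_of_fv_eq_empty (F := .neg G) hsG hG)
    refine not_holds_quantPrefix_of_holds_dual (holds_quantPrefix_absF (H0 := .neg Hb) hGc hGb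
      (fun C hC l hl t ht => (hGbT C hC l hl t ht).vars_eq_nil)
      (fun D hD J b hGb hHb => h2 D hD J b hHb hGb) hHbg hzs hvinj hpair
      (fun f hS hf ts => not_not_intro (isGTm_gSet_of_mem_right hS hf ts)) a) ?_
    exact (Fml.holds_iff_of_agreeExcept hI fun f hf hgc => hgcFc f hgc (hfuns hf).1).mp hH
  · rintro ⟨b, p⟩ hbp
    obtain ⟨ts, hts⟩ := preds_quantPrefix_absF_subset _ _ _ _ _ hbp
    exact ⟨hpredF (exists_mem_litsP_of_instances hFb (h3 hts).1),
      hpredG (exists_mem_litsP_of_instances hGb (h3 hts).2)⟩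
  · intro f hf
    obtain ⟨hFc, hGc⟩ := hfuns hf
    exact ⟨(hfunF hFc).resolve_right fun h => hfcGc f h hGc,
      (hfunG hGc).resolve_right fun h => hgcFc f h hFc⟩

/-- Correctness of the CTI method with interpolant lifting. -/
theorem cti_lifting_correct (F G : Fml) (hsF : F.fv = ∅) (hsG : G.fv = ∅)
    (hFG : Entails F G)
    (Fc Gc : CForm) (fc gc : Set ℕ)
    (hdisj : fc ∩ gc = ∅)
    (hfcG : ∀ s ∈ fc, s ∉ G.funs) (hfcGc : ∀ s ∈ fc, s ∉ cformFuns Gc)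
    (hfcF : ∀ s ∈ fc, s ∉ F.funs)
    (hgcF : ∀ s ∈ gc, s ∉ F.funs) (hgcFc : ∀ s ∈ gc, s ∉ cformFuns Fc)
    (hgcG : ∀ s ∈ gc, s ∉ G.funs)
    (hfunF : cformFuns Fc ⊆ F.funs ∪ fc)
    (hfunG : cformFuns Gc ⊆ G.funs ∪ gc)
    (hpredF : (cformFml Fc).preds ⊆ F.preds)
    (hpredG : (Fml.neg (cformFml Gc)).preds ⊆ G.preds)
    (heqvF : ∀ (D : Type) (_ : Nonempty D) (I : Interp D),
        (∀ a : ℕ → D, F.holds I a) ↔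
          ∃ I' : Interp D, AgreeExcept fc ∅ I I' ∧ ∀ a : ℕ → D, (cformFml Fc).holds I' a)
    (heqvG : ∀ (D : Type) (_ : Nonempty D) (I : Interp D),
        (∀ a : ℕ → D, (Fml.neg G).holds I a) ↔
          ∃ I' : Interp D, AgreeExcept gc ∅ I I' ∧ ∀ a : ℕ → D, (cformFml Gc).holds I' a)
    (k : ℕ) (hkF : k ∉ F.funs) (hkG : k ∉ G.funs)
    (hkFc : k ∉ cformFuns Fc) (hkGc : k ∉ cformFuns Gc)
    (Fb Gb : CForm)
    (hFb : ∀ C ∈ Fb, ∃ D ∈ Fc, instClause C D)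
    (hGb : ∀ C ∈ Gb, ∃ D ∈ Gc, instClause C D)
    (hFbT : ∀ C ∈ Fb, ∀ l ∈ C, ∀ t ∈ l.2.2,
      Tm.builtFrom (cformFuns Fc ∪ cformFuns Gc) {k} t)
    (hGbT : ∀ C ∈ Gb, ∀ l ∈ C, ∀ t ∈ l.2.2,
      Tm.builtFrom (cformFuns Fc ∪ cformFuns Gc) {k} t)
    (Hb : Fml) (hHbg : Hb.isGround)
    (h1 : Entails (cformFml Fb) Hb)
    (h2 : Entails Hb (.neg (cformFml Gb)))
    (h3 : Fml.lits Hb ⊆ Fml.lits (cformFml Fb) ∩ Fml.lits (.neg (cformFml Gb)))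
    (v : Tm → ℕ)
    (hvinj : ∀ t ∈ Hb.topTerms (fSet Fc Gc ∪ gSet Fc Gc k),
             ∀ u ∈ Hb.topTerms (fSet Fc Gc ∪ gSet Fc Gc k), v t = v u → t = u)
    (zs : List Tm) (hnd : zs.Nodup)
    (hzs : ∀ t : Tm, t ∈ zs ↔ t ∈ Hb.topTerms (fSet Fc Gc ∪ gSet Fc Gc k))
    (hord : ∀ (i j : ℕ) (hi : i < zs.length) (hj : j < zs.length),
      StrictSubt (zs.get ⟨i, hi⟩) (zs.get ⟨j, hj⟩) → i < j) :
    CraigLyndon F G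
      (mkPrefix (gSet Fc Gc k) v zs (Hb.absF (fSet Fc Gc ∪ gSet Fc Gc k) v)) :=
  cti_lifting_correct_general F G hsF hsG Fc Gc fc gc hfcGc hgcFc hfunF hfunG hpredF hpredG heqvF
    heqvG k hkFc Fb Gb hFb hGb hFbT hGbT Hb hHbg h1 h2 h3 v hvinj zs hzs hord

end CTI
end
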